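/- Let p ≥ 1, N ≥ 2, K ≥ 1, let b > 0, γ ∈ (0,1), D ≥ 0. For each round k = 1,…,K, let rewards d^k_1,…,d^k_p satisfy 0 ≤ d^k_j ≤ D, let advice vectors e^{k,n} ∈ ℝ^p have nonnegative entries with Σ_{j=1}^p e^{k,n}_j = b for each expert n, and let I_k ⊆ {1,…,p}. Define the Exp4 recursion: w_{1,n} = 1, W_k = Σ_{n=1}^N w_{k,n}, q_{k,n} = w_{k,n}/W_k, π^k_j = (1−γ) Σ_{n=1}^N q_{k,n} e^{k,n}_j + γb/p, d̂^k_j = (d^k_j/π^k_j) if j ∈ I_k and 0 otherwise, y_{k,n} = Σ_{j=1}^p e^{k,n}_j d̂^k_j, and w_{k+1,n} = w_{k,n}·exp(γ y_{k,n}/p). Assume γ y_{k,n}/p ≤ 1 for all k and n. Then for every expert n ∈ {1,…,N}: Σ_{k=1}^K Σ_{j∈I_k} d^k_j ≥ (1−γ)·Σ_{k=1}^K y_{k,n} − ((e−2)bDγ/p)·Σ_{k=1}^K Σ_{j∈I_k} d̂^k_j − p(1−γ)(ln N)/γ. -/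

import Mathlib

/-!
Potential argument for exponential weights. Since `exp x ≤ 1 + x + (e - 2) x²` for `x ≤ 1`, each
round increases `log W` by at most the `q`-average of `x + (e - 2) x²`, while `log W_K` is at least
the total gain `∑ₖ xₖₙ` of any single expert (all weights start at `1`, so `log W₀ = log N`).
With `x = γ y / p`, both moments of `y` under `q` are controlled by the exploration floor: the
mixture `(1 - γ) ∑ₙ qₙ eₙ` is dominated by `π`, and `π_j d̂_j = d_j 1[j ∈ I]`. This bounds the
first moment by the observed reward and, via Cauchy–Schwarz against `eₙ` (of mass `b`), the
second moment by `b D ∑_{j ∈ I} d̂_j`.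
-/

open Finset

section ExpBound

open Real

theorem hasSum_exp_sub_one_sub (x : ℝ) :
    HasSum (fun n : ℕ => x ^ (n + 2) / (n + 2).factorial) (exp x - 1 - x) := by
  have h := NormedSpace.expSeries_div_hasSum_exp (𝔸 := ℝ) x
  rw [← Real.exp_eq_exp_ℝ] at h
  simpa [sum_range_succ, sub_sub] using (hasSum_nat_add_iff' 2).2 h

theorem exp_le_one_add_add_mul_sq {x : ℝ} (hx : x ≤ 1) :
    exp x ≤ 1 + x + (exp 1 - 2) * x ^ 2 := by
  have he : 2.7182818283 < exp 1 := exp_one_gt_d9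
  rcases le_or_gt x (-1) with hx' | hx'
  · have hinv : exp x ≤ (exp 1)⁻¹ := by
      rw [← exp_neg]; exact exp_le_exp.2 hx'
    have : (exp 1)⁻¹ ≤ exp 1 - 2 := by
      rw [inv_le_iff_one_le_mul₀ (by positivity)]; nlinarith
    -- with `c = e - 2`: `1 + x + c x² - c = (x + 1) (c (x - 1) + 1)`, both factors `≤ 0`
    nlinarith [mul_nonneg (neg_nonneg.2 (by linarith : x + 1 ≤ 0))
      (neg_nonneg.2 (by nlinarith : (exp 1 - 2) * (x - 1) + 1 ≤ 0))]
  · have hterm (n : ℕ) :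
        x ^ (n + 2) / (n + 2).factorial ≤ x ^ 2 * (1 ^ (n + 2) / (n + 2).factorial) := by
      rw [one_pow, mul_one_div]
      refine div_le_div_of_nonneg_right ?_ (by positivity)
      calc x ^ (n + 2) ≤ |x| ^ (n + 2) := (le_abs_self _).trans (abs_pow x _).le
        _ ≤ |x| ^ 2 := pow_le_pow_of_le_one (abs_nonneg x) (abs_le.2 ⟨hx'.le, hx⟩) (by omega)
        _ = x ^ 2 := sq_abs x
    have := hasSum_le hterm (hasSum_exp_sub_one_sub x) ((hasSum_exp_sub_one_sub 1).mul_left _)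
    linarith

end ExpBound

theorem Fin.sum_univ_sub {M : Type*} [AddCommGroup M] (f : ℕ → M) (K : ℕ) :
    ∑ k : Fin K, (f (k + 1) - f k) = f K - f 0 := by
  rw [Fin.sum_univ_eq_sum_range (fun k => f (k + 1) - f k), Finset.sum_range_sub]

section ExponentialWeights

open Real

variable {ι : Type*} {K : ℕ} {w : ℕ → ι → ℝ} {x : Fin K → ι → ℝ}

theorem exp_weights_pos (hw0 : ∀ n, w 0 n = 1)
    (hrec : ∀ (k : Fin K) n, w (k + 1) n = w k n * exp (x k n)) :
    ∀ m ≤ K, ∀ n, 0 < w m n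
  | 0, _, n => by simp [hw0]
  | m + 1, hm, n => by
    rw [hrec ⟨m, hm⟩ n]
    exact mul_pos (exp_weights_pos hw0 hrec m (by omega) n) (exp_pos _)

variable [Fintype ι] [Nonempty ι]

theorem log_sum_mul_exp_le {v a : ι → ℝ} (hv : ∀ n, 0 < v n) (ha : ∀ n, a n ≤ 1) :
    log (∑ n, v n * exp (a n)) ≤
      log (∑ n, v n) + ∑ n, v n / (∑ m, v m) * (a n + (exp 1 - 2) * a n ^ 2) := by
  set V := ∑ n, v n
  have hV : 0 < V := sum_pos (fun n _ => hv n) univ_nonempty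
  have hA : 0 < ∑ n, v n * exp (a n) :=
    sum_pos (fun n _ => mul_pos (hv n) (exp_pos _)) univ_nonempty
  have hle : (∑ n, v n * exp (a n)) / V ≤
      1 + ∑ n, v n / V * (a n + (exp 1 - 2) * a n ^ 2) := by
    rw [div_le_iff₀ hV]
    calc ∑ n, v n * exp (a n) ≤ ∑ n, (v n + v n * (a n + (exp 1 - 2) * a n ^ 2)) :=
          sum_le_sum fun n _ => by
            nlinarith [mul_le_mul_of_nonneg_left (exp_le_one_add_add_mul_sq (ha n)) (hv n).le]
      _ = (1 + ∑ n, v n / V * (a n + (exp 1 - 2) * a n ^ 2)) * V := by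
          rw [sum_add_distrib, add_mul, one_mul, sum_mul]
          exact congrArg _ (sum_congr rfl fun n _ => by field_simp)
  have := log_le_sub_one_of_pos (div_pos hA hV)
  rw [log_div hA.ne' hV.ne'] at this
  linarith

theorem sum_le_log_card_add_sum_exp_weights (hw0 : ∀ n, w 0 n = 1)
    (hrec : ∀ (k : Fin K) n, w (k + 1) n = w k n * exp (x k n)) (hx : ∀ k n, x k n ≤ 1)
    (n₀ : ι) :
    ∑ k, x k n₀ ≤ log (Fintype.card ι) +
      ∑ k : Fin K, ∑ n, w k n / (∑ m, w k m) * (x k n + (exp 1 - 2) * x k n ^ 2) := by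
  have hpos := exp_weights_pos hw0 hrec
  have hlog : ∑ k, x k n₀ = log (w K n₀) := by
    rw [← sub_zero (log (w K n₀)), ← log_one, ← hw0 n₀,
      ← Fin.sum_univ_sub (fun m => log (w m n₀))]
    refine sum_congr rfl fun k _ => ?_
    rw [hrec, log_mul (hpos k k.is_lt.le n₀).ne' (exp_pos _).ne', log_exp]
    ring
  calc ∑ k, x k n₀ = log (w K n₀) := hlog
    _ ≤ log (∑ n, w K n) := log_le_log (hpos K le_rfl n₀)
          (single_le_sum (fun n _ => (hpos K le_rfl n).le) (mem_univ n₀))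
    _ = log (∑ n, w 0 n) + ∑ k : Fin K, (log (∑ n, w (k + 1) n) - log (∑ n, w k n)) := by
          rw [Fin.sum_univ_sub (fun m => log (∑ n, w m n))]
          ring
    _ ≤ _ := by
          simp only [hw0, sum_const, card_univ, nsmul_eq_mul, mul_one, hrec]
          gcongr with k
          linarith [log_sum_mul_exp_le (fun n => hpos k k.is_lt.le n) (hx k)]

end ExponentialWeights

section ImportanceWeighting

variable {ι κ : Type*} {q : ι → ℝ} {e : ι → κ → ℝ} {π d dhat : κ → ℝ} {I : Finset κ} {s : ℝ}

theorem mul_sum_mixture_le [Fintype ι] [Fintype κ]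
    (hmix : ∀ j, s * ∑ n, q n * e n j ≤ π j) {g : κ → ℝ} (hg : ∀ j, 0 ≤ g j) :
    s * ∑ n, q n * ∑ j, e n j * g j ≤ ∑ j, π j * g j := by
  have hswap : ∑ n, q n * ∑ j, e n j * g j = ∑ j, (∑ n, q n * e n j) * g j :=
    Matrix.dotProduct_mulVec q e g
  rw [hswap, mul_sum]
  exact sum_le_sum fun j _ => by
    rw [← mul_assoc]
    exact mul_le_mul_of_nonneg_right (hmix j) (hg j)

variable [DecidableEq κ]

theorem importance_estimate_nonneg (hπ : ∀ j, 0 < π j)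
    (hdhat : ∀ j, dhat j = if j ∈ I then d j / π j else 0) (hd : ∀ j, 0 ≤ d j) (j : κ) :
    0 ≤ dhat j := by
  rw [hdhat]
  split_ifs
  · exact div_nonneg (hd j) (hπ j).le
  · exact le_rfl

variable [Fintype ι] [Fintype κ]

theorem sum_mul_importance_estimate (hπ : ∀ j, 0 < π j)
    (hdhat : ∀ j, dhat j = if j ∈ I then d j / π j else 0) (g : κ → ℝ) :
    ∑ j, π j * dhat j * g j = ∑ j ∈ I, d j * g j := by
  calc ∑ j, π j * dhat j * g j = ∑ j, if j ∈ I then d j * g j else 0 :=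
        sum_congr rfl fun j _ => by
          rw [hdhat]
          split_ifs
          · rw [mul_div_cancel₀ _ (hπ j).ne']
          · simp
    _ = ∑ j ∈ I, d j * g j := by rw [sum_ite_mem, univ_inter]

variable (hπ : ∀ j, 0 < π j) (hmix : ∀ j, s * ∑ n, q n * e n j ≤ π j)
  (hdhat : ∀ j, dhat j = if j ∈ I then d j / π j else 0)
include hπ hmix hdhat

theorem mul_sum_importance_first_moment_le (hd : ∀ j, 0 ≤ d j) :
    s * ∑ n, q n * ∑ j, e n j * dhat j ≤ ∑ j ∈ I, d j := by
  have := sum_mul_importance_estimate hπ hdhat 1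
  simp only [Pi.one_apply, mul_one] at this
  exact this ▸ mul_sum_mixture_le hmix (importance_estimate_nonneg hπ hdhat hd)

theorem mul_sum_importance_second_moment_le {b D : ℝ} (hb : 0 ≤ b) (hs : 0 ≤ s)
    (hq : ∀ n, 0 ≤ q n) (he : ∀ n j, 0 ≤ e n j) (hesum : ∀ n, ∑ j, e n j = b)
    (hd : ∀ j, 0 ≤ d j ∧ d j ≤ D) :
    s * ∑ n, q n * (∑ j, e n j * dhat j) ^ 2 ≤ b * D * ∑ j ∈ I, dhat j := by
  have hdhat0 := importance_estimate_nonneg hπ hdhat fun j => (hd j).1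
  have hcs (n : ι) : (∑ j, e n j * dhat j) ^ 2 ≤ b * ∑ j, e n j * dhat j ^ 2 := by
    rw [← hesum n]
    exact sum_sq_le_sum_mul_sum_of_sq_le_mul _ (fun j _ => he n j)
      (fun j _ => mul_nonneg (he n j) (sq_nonneg _)) (fun j _ => le_of_eq (by ring))
  calc s * ∑ n, q n * (∑ j, e n j * dhat j) ^ 2
      ≤ s * ∑ n, q n * (b * ∑ j, e n j * dhat j ^ 2) := by
        gcongr with n
        exacts [hq n, hcs n]
    _ = b * (s * ∑ n, q n * ∑ j, e n j * dhat j ^ 2) := by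
        simp only [mul_left_comm (q _) b, ← mul_sum]
        ring
    _ ≤ b * ∑ j, π j * dhat j * dhat j := by
        refine mul_le_mul_of_nonneg_left ?_ hb
        simpa only [sq, mul_assoc] using mul_sum_mixture_le hmix fun j => sq_nonneg (dhat j)
    _ = b * ∑ j ∈ I, d j * dhat j := by rw [sum_mul_importance_estimate hπ hdhat]
    _ ≤ b * ∑ j ∈ I, D * dhat j := mul_le_mul_of_nonneg_left
        (sum_le_sum fun j _ => mul_le_mul_of_nonneg_right (hd j).2 (hdhat0 j)) hb
    _ = b * D * ∑ j ∈ I, dhat j := by simp only [mul_sum, mul_assoc]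

theorem mul_sum_quadratic_importance_le {y : ι → ℝ} {a c b D : ℝ} (ha : 0 ≤ a) (hc : 0 ≤ c)
    (hb : 0 ≤ b) (hs : 0 ≤ s) (hq : ∀ n, 0 ≤ q n) (he : ∀ n j, 0 ≤ e n j)
    (hesum : ∀ n, ∑ j, e n j = b) (hd : ∀ j, 0 ≤ d j ∧ d j ≤ D)
    (hy : ∀ n, y n = ∑ j, e n j * dhat j) :
    s * ∑ n, q n * (a * y n + c * (a * y n) ^ 2) ≤
      a * ∑ j ∈ I, d j + c * a ^ 2 * (b * D * ∑ j ∈ I, dhat j) := by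
  have h1 := mul_sum_importance_first_moment_le hπ hmix hdhat fun j => (hd j).1
  have h2 := mul_sum_importance_second_moment_le hπ hmix hdhat hb hs hq he hesum hd
  simp only [← hy] at h1 h2
  have hsplit : s * ∑ n, q n * (a * y n + c * (a * y n) ^ 2) =
      a * (s * ∑ n, q n * y n) + c * a ^ 2 * (s * ∑ n, q n * y n ^ 2) := by
    simp only [mul_sum, ← sum_add_distrib]
    exact sum_congr rfl fun n _ => by ring
  rw [hsplit]
  gcongr

end ImportanceWeighting

theorem exp4_sample_path_inequality_general (p N K : ℕ) (hp : 1 ≤ p)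
    (b γ D : ℝ) (hb : 0 < b) (hγ : γ ∈ Set.Ioo (0 : ℝ) 1)
    (d : Fin K → Fin p → ℝ) (hd : ∀ k j, 0 ≤ d k j ∧ d k j ≤ D)
    (e : Fin K → Fin N → Fin p → ℝ)
    (he0 : ∀ k n j, 0 ≤ e k n j) (hesum : ∀ k n, ∑ j, e k n j = b)
    (I : Fin K → Finset (Fin p))
    (w : ℕ → Fin N → ℝ) (hw0 : ∀ n, w 0 n = 1)
    (W : ℕ → ℝ) (hW : ∀ k, W k = ∑ n, w k n)
    (q : Fin K → Fin N → ℝ) (hq : ∀ k n, q k n = w k n / W k)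
    (π : Fin K → Fin p → ℝ)
    (hπ : ∀ k j, π k j = (1 - γ) * (∑ n, q k n * e k n j) + γ * b / p)
    (dhat : Fin K → Fin p → ℝ)
    (hdhat : ∀ k j, dhat k j = if j ∈ I k then d k j / π k j else 0)
    (y : Fin K → Fin N → ℝ)
    (hy : ∀ k n, y k n = ∑ j, e k n j * dhat k j)
    (hwrec : ∀ (k : Fin K) (n : Fin N), w ((k : ℕ) + 1) n = w k n * Real.exp (γ * y k n / p))
    (hbound : ∀ k n, γ * y k n / p ≤ 1) :
    ∀ n : Fin N,
      ∑ k, ∑ j ∈ I k, d k j ≥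
        (1 - γ) * (∑ k, y k n)
          - ((Real.exp 1 - 2) * b * D * γ / p) * ∑ k, ∑ j ∈ I k, dhat k j
          - p * (1 - γ) * Real.log N / γ := by
  intro n₀
  obtain ⟨hγ0, hγ1⟩ := hγ
  have : Nonempty (Fin N) := ⟨n₀⟩
  have ha : 0 < γ / p := by positivity
  have hexp : 0 < γ * b / p := by positivity
  have hc : 0 ≤ Real.exp 1 - 2 := by linarith [Real.add_one_le_exp 1]
  have hwpos := exp_weights_pos (x := fun k n => γ * y k n / p) hw0 hwrec
  have hq0 (k : Fin K) (n : Fin N) : 0 ≤ q k n := by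
    rw [hq, hW]
    exact div_nonneg (hwpos k k.is_lt.le n).le (sum_nonneg fun m _ => (hwpos k k.is_lt.le m).le)
  have hmix (k : Fin K) (j : Fin p) : (1 - γ) * ∑ n, q k n * e k n j ≤ π k j := by
    rw [hπ]; linarith
  have hπpos (k : Fin K) (j : Fin p) : 0 < π k j := by
    have : 0 ≤ (1 - γ) * ∑ n, q k n * e k n j :=
      mul_nonneg (by linarith) (sum_nonneg fun n _ => mul_nonneg (hq0 k n) (he0 k n j))
    rw [hπ]; linarith
  have hregret :=
    sum_le_log_card_add_sum_exp_weights (x := fun k n => γ * y k n / p) hw0 hwrec hbound n₀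
  simp only [← hW, ← hq, Fintype.card_fin, mul_div_right_comm γ, ← mul_sum] at hregret
  have hround := sum_le_sum fun k (_ : k ∈ univ) =>
    mul_sum_quadratic_importance_le (hπpos k) (hmix k) (hdhat k) ha.le hc hb.le
      (sub_nonneg.2 hγ1.le) (hq0 k) (he0 k) (hesum k) (hd k) (hy k)
  simp only [← mul_sum, sum_add_distrib] at hround
  have hlog : γ / p * (p * (1 - γ) * Real.log N / γ) = (1 - γ) * Real.log N := by
    field_simp
  rw [ge_iff_le, ← mul_le_mul_iff_right₀ ha]
  linear_combination (1 - γ) * hregret + hround - hlog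

theorem exp4_sample_path_inequality (p N K : ℕ) (hp : 1 ≤ p) (hN : 2 ≤ N) (hK : 1 ≤ K)
    (b γ D : ℝ) (hb : 0 < b) (hγ : γ ∈ Set.Ioo (0 : ℝ) 1) (hD : 0 ≤ D)
    (d : Fin K → Fin p → ℝ) (hd : ∀ k j, 0 ≤ d k j ∧ d k j ≤ D)
    (e : Fin K → Fin N → Fin p → ℝ)
    (he0 : ∀ k n j, 0 ≤ e k n j) (hesum : ∀ k n, ∑ j, e k n j = b)
    (I : Fin K → Finset (Fin p))
    (w : ℕ → Fin N → ℝ) (hw0 : ∀ n, w 0 n = 1)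
    (W : ℕ → ℝ) (hW : ∀ k, W k = ∑ n, w k n)
    (q : Fin K → Fin N → ℝ) (hq : ∀ k n, q k n = w k n / W k)
    (π : Fin K → Fin p → ℝ)
    (hπ : ∀ k j, π k j = (1 - γ) * (∑ n, q k n * e k n j) + γ * b / p)
    (dhat : Fin K → Fin p → ℝ)
    (hdhat : ∀ k j, dhat k j = if j ∈ I k then d k j / π k j else 0)
    (y : Fin K → Fin N → ℝ)
    (hy : ∀ k n, y k n = ∑ j, e k n j * dhat k j)
    (hwrec : ∀ (k : Fin K) (n : Fin N), w ((k : ℕ) + 1) n = w k n * Real.exp (γ * y k n / p))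
    (hbound : ∀ k n, γ * y k n / p ≤ 1) :
    ∀ n : Fin N,
      ∑ k, ∑ j ∈ I k, d k j ≥
        (1 - γ) * (∑ k, y k n)
          - ((Real.exp 1 - 2) * b * D * γ / p) * ∑ k, ∑ j ∈ I k, dhat k j
          - p * (1 - γ) * Real.log N / γ :=
  exp4_sample_path_inequality_general p N K hp b γ D hb hγ d hd e he0 hesum I w hw0 W hW q hq π hπ
    dhat hdhat y hy hwrec hbound
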